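/- arXiv:1910.05544 — 7 statements merged into one kernel-verified Lean document; each statement's English description precedes it below -/
import Mathlib

section
/- Let f : ℝⁿ → ℝ be differentiable with L-Lipschitz continuous gradient (L > 0) and let γ > 0. Suppose (u^t, v^t, x^t) are PDR iterates. Then for all t ≥ 1, ‖x^t − x^{t−1}‖ ≤ (1 + γL)·‖u^{t+1} − u^t‖. -/
open scoped InnerProductSpace RealInnerProductSpace
open Filter Topology

/-- For PDR iterates, `‖x^t − x^{t−1}‖ ≤ (1 + γL)‖u^{t+1} − u^t‖` for all `t ≥ 1`. -/
theorem pdr_dist_x_le {n : ℕ} (L γ α : ℝ) (hL : 0 < L) (hγ : 0 < γ)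
    (hα : 3/2 < α ∧ α ≤ 2)
    (f : EuclideanSpace ℝ (Fin n) → ℝ) (g : EuclideanSpace ℝ (Fin n) → EReal)
    (hf : Differentiable ℝ f)
    (hlip : ∀ y₁ y₂, ‖gradient f y₁ - gradient f y₂‖ ≤ L * ‖y₁ - y₂‖)
    (hg_lsc : LowerSemicontinuous g) (hg_bot : ∀ w, g w ≠ ⊥) (hg_proper : ∃ w, g w ≠ ⊤)
    (u v x : ℕ → EuclideanSpace ℝ (Fin n))
    (hu : ∀ t : ℕ, ∀ w, f (u (t+1)) + (1/(2*γ)) * ‖u (t+1) - x t‖^2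
        ≤ f w + (1/(2*γ)) * ‖w - x t‖^2)
    (hv : ∀ t : ℕ, ∀ w,
        g (v (t+1)) + (((1/(2*γ)) * ‖v (t+1) - (α • u (t+1) - x t)‖^2 : ℝ) : EReal)
        ≤ g w + (((1/(2*γ)) * ‖w - (α • u (t+1) - x t)‖^2 : ℝ) : EReal))
    (hx : ∀ t : ℕ, x (t+1) = x t + v (t+1) - u (t+1))
    (hgradu : ∀ t : ℕ, gradient f (u (t+1)) + (1/γ) • (u (t+1) - x t) = 0) :
    ∀ t : ℕ, 1 ≤ t → ‖x t - x (t-1)‖ ≤ (1 + γ * L) * ‖u (t+1) - u t‖ := by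
  have hxk : ∀ k : ℕ, x k = u (k+1) + γ • gradient f (u (k+1)) := by
    intro k
    have h := hgradu k
    have h1 : (1/γ) • (u (k+1) - x k) = - gradient f (u (k+1)) := by
      rw [eq_neg_iff_add_eq_zero, add_comm]; exact h
    have h2 : γ • ((1/γ) • (u (k+1) - x k)) = γ • (- gradient f (u (k+1))) := by rw [h1]
    rw [smul_smul, mul_one_div, div_self hγ.ne', one_smul] at h2
    have h3 : x k - u (k+1) = γ • gradient f (u (k+1)) := by
      rw [← neg_sub, h2, smul_neg, neg_neg]
    rw [(sub_eq_iff_eq_add.mp h3), add_comm]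
  intro t ht
  obtain ⟨s, rfl⟩ : ∃ s, t = s + 1 := ⟨t - 1, (Nat.succ_pred_eq_of_pos ht).symm⟩
  simp only [Nat.add_sub_cancel]
  have key : x (s+1) - x s = (u (s+2) - u (s+1)) + γ • (gradient f (u (s+2)) - gradient f (u (s+1))) := by
    rw [hxk (s+1), hxk s, smul_sub]
    abel
  calc ‖x (s+1) - x s‖ = ‖(u (s+2) - u (s+1)) + γ • (gradient f (u (s+2)) - gradient f (u (s+1)))‖ := by rw [key]
    _ ≤ ‖u (s+2) - u (s+1)‖ + ‖γ • (gradient f (u (s+2)) - gradient f (u (s+1)))‖ := norm_add_le _ _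
    _ = ‖u (s+2) - u (s+1)‖ + γ * ‖gradient f (u (s+2)) - gradient f (u (s+1))‖ := by
        rw [norm_smul, Real.norm_of_nonneg hγ.le]
    _ ≤ ‖u (s+2) - u (s+1)‖ + γ * (L * ‖u (s+2) - u (s+1)‖) := by
        have := hlip (u (s+2)) (u (s+1))
        nlinarith
    _ = (1 + γ * L) * ‖u (s+2) - u (s+1)‖ := by ring
end

section
/- Let f : ℝⁿ → ℝ be differentiable and let l ∈ ℝ be such that the function u ↦ f(u) + (l/2)‖u‖² is convex. Let γ > 0 and suppose u₁, u₂, x₀, x₁ ∈ ℝⁿ satisfy 0 = ∇f(u₁) + (1/γ)(u₁ − x₀) and 0 = ∇f(u₂) + (1/γ)(u₂ − x₁). Then ⟨u₂ − u₁, x₁ − x₀⟩ ≥ (1 − γl)·‖u₂ − u₁‖². -/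
open scoped InnerProductSpace RealInnerProductSpace

/-! Convexity of `f + (l/2)‖·‖²` makes its gradient `∇f + l • id` monotone, i.e.
`⟪∇f y - ∇f x, y - x⟫ ≥ -l ‖y - x‖²`. The optimality conditions read `γ ∇f uᵢ = xᵢ₋₁ - uᵢ`;
substituting them into this inequality, scaled by `γ > 0`, gives the claim. -/

section FirstOrder

variable {E : Type*} [NormedAddCommGroup E] [NormedSpace ℝ E] {s : Set E} {g : E → ℝ}
  {x y : E}

theorem ConvexOn.apply_sub_le_sub_of_hasFDerivAt {g' : E →L[ℝ] ℝ} (hg : ConvexOn ℝ s g)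
    (hx : x ∈ s) (hy : y ∈ s) (hg' : HasFDerivAt g g' x) :
    g' (y - x) ≤ g y - g x := by
  have hline : ConvexOn ℝ (AffineMap.lineMap (k := ℝ) x y ⁻¹' s)
      (g ∘ AffineMap.lineMap (k := ℝ) x y) :=
    hg.comp_affineMap _
  have hderiv : HasDerivAt (g ∘ AffineMap.lineMap (k := ℝ) x y) (g' (y - x)) 0 := by
    rw [← AffineMap.lineMap_apply_zero (k := ℝ) x y] at hg'
    exact hg'.comp_hasDerivAt 0 AffineMap.hasDerivAt_lineMap
  simpa [slope_def_field] using
    hline.le_slope_of_hasDerivAt (by simpa using hx) (by simpa using hy) one_pos hderiv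

theorem ConvexOn.apply_sub_le_of_hasFDerivAt {gx' gy' : E →L[ℝ] ℝ} (hg : ConvexOn ℝ s g)
    (hx : x ∈ s) (hy : y ∈ s) (hgx : HasFDerivAt g gx' x) (hgy : HasFDerivAt g gy' y) :
    gx' (y - x) ≤ gy' (y - x) := by
  have hxy := hg.apply_sub_le_sub_of_hasFDerivAt hx hy hgx
  have hyx := hg.apply_sub_le_sub_of_hasFDerivAt hy hx hgy
  rw [← neg_sub, map_neg] at hyx
  linarith

end FirstOrder

section Hypomonotone

variable {F : Type*} [NormedAddCommGroup F] [InnerProductSpace ℝ F] [CompleteSpace F]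
  {s : Set F} {f : F → ℝ} {x y : F}

theorem HasGradientAt.add_half_mul_norm_sq {a : F} (l : ℝ) (hf : HasGradientAt f a x) :
    HasGradientAt (fun w => f w + (l / 2) * ‖w‖ ^ 2) (a + l • x) x := by
  rw [hasGradientAt_iff_hasFDerivAt] at hf ⊢
  refine (hf.add ((hasStrictFDerivAt_norm_sq x).hasFDerivAt.const_mul (l / 2))).congr_fderiv ?_
  ext v
  simp only [add_apply, smul_apply, InnerProductSpace.toDual_apply_apply, innerSL_apply_apply,
    inner_add_left, real_inner_smul_left, nsmul_eq_mul, smul_eq_mul]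
  ring

theorem ConvexOn.inner_gradient_sub_ge_of_add_half_mul_norm_sq {l : ℝ}
    (hconv : ConvexOn ℝ s (fun w => f w + (l / 2) * ‖w‖ ^ 2)) (hx : x ∈ s) (hy : y ∈ s)
    (hfx : DifferentiableAt ℝ f x) (hfy : DifferentiableAt ℝ f y) :
    -l * ‖y - x‖ ^ 2 ≤ ⟪gradient f y - gradient f x, y - x⟫ := by
  have hmono := hconv.apply_sub_le_of_hasFDerivAt hx hy
    (hasGradientAt_iff_hasFDerivAt.mp (hfx.hasGradientAt.add_half_mul_norm_sq l))
    (hasGradientAt_iff_hasFDerivAt.mp (hfy.hasGradientAt.add_half_mul_norm_sq l))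
  simp only [InnerProductSpace.toDual_apply_apply, inner_add_left, real_inner_smul_left] at hmono
  rw [inner_sub_left, ← real_inner_self_eq_norm_sq, inner_sub_left]
  linarith

end Hypomonotone

theorem smul_eq_sub_of_add_one_div_smul_sub_eq_zero {K V : Type*} [Field K] [AddCommGroup V]
    [Module K V] {γ : K} (hγ : γ ≠ 0) {a u x : V} (h : a + (1 / γ) • (u - x) = 0) :
    γ • a = x - u := by
  rw [add_eq_zero_iff_eq_neg.mp h, smul_neg, smul_smul, mul_one_div_cancel hγ, one_smul, neg_sub]

/-- the monotonicity-type inequality obtained from the first-order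
conditions of two proximal subproblems of `f`. -/
theorem inner_ge_of_prox_optimality {n : ℕ} (l γ : ℝ) (hγ : 0 < γ)
    (f : EuclideanSpace ℝ (Fin n) → ℝ) (hf : Differentiable ℝ f)
    (hconv : ConvexOn ℝ Set.univ (fun w => f w + (l/2) * ‖w‖^2))
    (u₁ u₂ x₀ x₁ : EuclideanSpace ℝ (Fin n))
    (h₁ : gradient f u₁ + (1/γ) • (u₁ - x₀) = 0)
    (h₂ : gradient f u₂ + (1/γ) • (u₂ - x₁) = 0) :
    (1 - γ * l) * ‖u₂ - u₁‖^2 ≤ ⟪u₂ - u₁, x₁ - x₀⟫_ℝ := by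
  have hmono := hconv.inner_gradient_sub_ge_of_add_half_mul_norm_sq (Set.mem_univ u₁)
    (Set.mem_univ u₂) (hf u₁) (hf u₂)
  have hgrad : γ • (gradient f u₂ - gradient f u₁) = (x₁ - x₀) - (u₂ - u₁) := by
    rw [smul_sub, smul_eq_sub_of_add_one_div_smul_sub_eq_zero hγ.ne' h₁,
      smul_eq_sub_of_add_one_div_smul_sub_eq_zero hγ.ne' h₂]
    abel
  calc (1 - γ * l) * ‖u₂ - u₁‖ ^ 2 = ‖u₂ - u₁‖ ^ 2 + γ * (-l * ‖u₂ - u₁‖ ^ 2) := by ring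
    _ ≤ ‖u₂ - u₁‖ ^ 2 + γ * ⟪gradient f u₂ - gradient f u₁, u₂ - u₁⟫ := by gcongr
    _ = ⟪u₂ - u₁, x₁ - x₀⟫ := by
      rw [← real_inner_smul_left, hgrad, inner_sub_left, real_inner_self_eq_norm_sq,
        real_inner_comm]
      ring
end

section
/- Let f : ℝⁿ → ℝ be differentiable with l ∈ ℝ such that f + (l/2)‖·‖² is convex, and let γ > 0. Suppose (u^t, v^t, x^t) are PDR iterates. Then for all t ≥ 1, ‖u^{t+1} − v^t‖² ≤ (−1 + 2γl)·‖u^{t+1} − u^t‖² + ‖x^t − x^{t−1}‖². -/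
open scoped RealInnerProductSpace

/-!
The optimality condition of the `u`-step reads `∇f(u^{t+1}) = (x^t − u^{t+1})/γ`. Convexity of
`f + (l/2)‖·‖²` makes `∇f + l·id` monotone; applied to `u^t, u^{t+1}` this gives
`⟪x^t − x^{t−1}, u^{t+1} − u^t⟫ ≥ (1 − γl)‖u^{t+1} − u^t‖²`. Since
`u^{t+1} − v^t = (u^{t+1} − u^t) − (x^t − x^{t−1})`, expanding the square gives the bound.
-/

theorem ConvexOn.fderiv_apply_sub_le {E : Type*} [NormedAddCommGroup E] [NormedSpace ℝ E]
    {h : E → ℝ} (hconv : ConvexOn ℝ Set.univ h) (hd : Differentiable ℝ h) (a b : E) :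
    fderiv ℝ h a (b - a) ≤ fderiv ℝ h b (b - a) := by
  set line : ℝ →ᵃ[ℝ] E := AffineMap.lineMap a b
  have hline : ConvexOn ℝ Set.univ (h ∘ line) := by
    simpa using hconv.comp_affineMap line
  have hderiv (s : ℝ) : HasDerivAt (h ∘ line) (fderiv ℝ h (line s) (b - a)) s :=
    (hd _).hasFDerivAt.comp_hasDerivAt s AffineMap.hasDerivAt_lineMap
  have hslope := (hline.le_slope_of_hasDerivAt trivial trivial zero_lt_one (hderiv 0)).trans
    (hline.slope_le_of_hasDerivAt trivial trivial zero_lt_one (hderiv 1))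
  simpa [line] using hslope

section InnerProductSpace

variable {E : Type*} [NormedAddCommGroup E] [InnerProductSpace ℝ E]

theorem neg_mul_norm_sq_le_inner_gradient_sub [CompleteSpace E] {f : E → ℝ} {l : ℝ}
    (hf : Differentiable ℝ f)
    (hconv : ConvexOn ℝ Set.univ (fun w => f w + (l/2) * ‖w‖^2)) (a b : E) :
    -l * ‖b - a‖^2 ≤ ⟪gradient f b - gradient f a, b - a⟫ := by
  have hderiv (w : E) : HasFDerivAt (fun w => f w + (l/2) * ‖w‖^2)
      (fderiv ℝ f w + (l/2) • (2 • innerSL ℝ w)) w :=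
    (hf w).hasFDerivAt.add ((hasStrictFDerivAt_norm_sq w).hasFDerivAt.const_mul (l/2))
  have hfderiv (w c : E) :
      fderiv ℝ (fun w => f w + (l/2) * ‖w‖^2) w c = ⟪gradient f w, c⟫ + l * ⟪w, c⟫ := by
    rw [(hderiv w).fderiv]
    simp [inner_gradient_left]
    ring
  have hmono := hconv.fderiv_apply_sub_le (fun w => (hderiv w).differentiableAt) a b
  rw [hfderiv, hfderiv] at hmono
  rw [inner_sub_left, ← real_inner_self_eq_norm_sq, inner_sub_left b a]
  linarith

theorem norm_sub_sq_le_of_neg_mul_norm_sq_le_inner {γ l : ℝ} (hγ : 0 < γ) {d e : E}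
    (h : -l * ‖d‖^2 ≤ ⟪(1/γ) • (e - d), d⟫) :
    ‖d - e‖^2 ≤ (-1 + 2*γ*l) * ‖d‖^2 + ‖e‖^2 := by
  rw [real_inner_smul_left, inner_sub_left, real_inner_self_eq_norm_sq] at h
  have hinner : (1 - γ * l) * ‖d‖^2 ≤ ⟪e, d⟫ := by
    have hγh := mul_le_mul_of_nonneg_left h hγ.le
    field_simp at hγh
    linarith
  rw [norm_sub_sq_real, real_inner_comm]
  linarith

end InnerProductSpace

theorem pdr_u_sub_v_sq_le_general {n : ℕ} (l γ : ℝ) (hγ : 0 < γ)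
    (f : EuclideanSpace ℝ (Fin n) → ℝ)
    (hf : Differentiable ℝ f)
    (hconv : ConvexOn ℝ Set.univ (fun w => f w + (l/2) * ‖w‖^2))
    (u v x : ℕ → EuclideanSpace ℝ (Fin n))
    (hx : ∀ t : ℕ, x (t+1) = x t + v (t+1) - u (t+1))
    (hgradu : ∀ t : ℕ, gradient f (u (t+1)) + (1/γ) • (u (t+1) - x t) = 0) :
    ∀ t : ℕ, 1 ≤ t →
      ‖u (t+1) - v t‖^2 ≤ (-1 + 2*γ*l) * ‖u (t+1) - u t‖^2 + ‖x t - x (t-1)‖^2 := by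
  intro t ht
  obtain ⟨s, rfl⟩ : ∃ s, t = s + 1 := ⟨t - 1, by omega⟩
  have hgrad (t : ℕ) : gradient f (u (t+1)) = (1/γ) • (x t - u (t+1)) := by
    rw [eq_neg_of_add_eq_zero_left (hgradu t), ← smul_neg, neg_sub]
  have hmono := neg_mul_norm_sq_le_inner_gradient_sub hf hconv (u (s+1)) (u (s+1+1))
  rw [hgrad, hgrad, ← smul_sub] at hmono
  have hv : u (s+1+1) - v (s+1) = (u (s+1+1) - u (s+1)) - (x (s+1) - x s) := by
    rw [hx]; abel
  rw [hv, Nat.add_sub_cancel]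
  refine norm_sub_sq_le_of_neg_mul_norm_sq_le_inner hγ ?_
  convert hmono using 3
  abel

/-- for PDR iterates,
`‖u^{t+1} − v^t‖² ≤ (−1 + 2γl)‖u^{t+1} − u^t‖² + ‖x^t − x^{t−1}‖²` for all `t ≥ 1`. -/
theorem pdr_u_sub_v_sq_le {n : ℕ} (l γ α : ℝ) (hγ : 0 < γ) (hα : 3/2 < α ∧ α ≤ 2)
    (f : EuclideanSpace ℝ (Fin n) → ℝ) (g : EuclideanSpace ℝ (Fin n) → EReal)
    (hf : Differentiable ℝ f)
    (hconv : ConvexOn ℝ Set.univ (fun w => f w + (l/2) * ‖w‖^2))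
    (hg_lsc : LowerSemicontinuous g) (hg_bot : ∀ w, g w ≠ ⊥) (hg_proper : ∃ w, g w ≠ ⊤)
    (u v x : ℕ → EuclideanSpace ℝ (Fin n))
    (hu : ∀ t : ℕ, ∀ w, f (u (t+1)) + (1/(2*γ)) * ‖u (t+1) - x t‖^2
        ≤ f w + (1/(2*γ)) * ‖w - x t‖^2)
    (hv : ∀ t : ℕ, ∀ w,
        g (v (t+1)) + (((1/(2*γ)) * ‖v (t+1) - (α • u (t+1) - x t)‖^2 : ℝ) : EReal)
        ≤ g w + (((1/(2*γ)) * ‖w - (α • u (t+1) - x t)‖^2 : ℝ) : EReal))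
    (hx : ∀ t : ℕ, x (t+1) = x t + v (t+1) - u (t+1))
    (hgradu : ∀ t : ℕ, gradient f (u (t+1)) + (1/γ) • (u (t+1) - x t) = 0) :
    ∀ t : ℕ, 1 ≤ t →
      ‖u (t+1) - v t‖^2 ≤ (-1 + 2*γ*l) * ‖u (t+1) - u t‖^2 + ‖x t - x (t-1)‖^2 :=
  pdr_u_sub_v_sq_le_general l γ hγ f hf hconv u v x hx hgradu
end

section
/- Suppose (u^t, v^t, x^t) are PDR iterates and g(v^t), g(v^{t+1}) are finite. Then for all t ≥ 0, M_γ(u^{t+1}, v^{t+1}, x^t) − M_γ(u^{t+1}, v^t, x^t) ≤ (1/γ)·(‖u^{t+1} − v^t‖² − ‖x^{t+1} − x^t‖²). -/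
open scoped InnerProductSpace RealInnerProductSpace
open Filter Topology

/-- The merit function of the parameterized Douglas–Rachford splitting method. -/
noncomputable def meritFun {n : ℕ} (γ α : ℝ) (f : EuclideanSpace ℝ (Fin n) → ℝ)
    (g : EuclideanSpace ℝ (Fin n) → EReal) (u v x : EuclideanSpace ℝ (Fin n)) : EReal :=
  (f u : EReal) + g v - (((1/(2*γ)) * ‖u - v‖^2 : ℝ) : EReal)
    + (((1/γ) * ⟪x - (α - 1) • u, v - u⟫_ℝ : ℝ) : EReal)
    + ((((2 - α)/(2*γ)) * ‖u‖^2 : ℝ) : EReal)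

private lemma pdr_key_id {n : ℕ} (α : ℝ) (u v w x : EuclideanSpace ℝ (Fin n)) :
    ‖v - (α • u - x)‖^2 - ‖w - (α • u - x)‖^2 + 2 * ⟪x - (α - 1) • u, w - v⟫_ℝ
      = ‖u - v‖^2 - ‖w - u‖^2 := by
  simp only [← real_inner_self_eq_norm_sq, inner_sub_left, inner_sub_right,
    inner_smul_left, inner_smul_right, real_inner_comm u v, real_inner_comm u w,
    real_inner_comm u x, real_inner_comm v x, real_inner_comm w x, real_inner_comm v w,
    RCLike.conj_to_real]
  ring

/-- the `v`-update decrease estimate for the merit function. -/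
theorem pdr_merit_v_update {n : ℕ} (γ α : ℝ) (hγ : 0 < γ) (hα : 3/2 < α ∧ α ≤ 2)
    (f : EuclideanSpace ℝ (Fin n) → ℝ) (g : EuclideanSpace ℝ (Fin n) → EReal)
    (hg_lsc : LowerSemicontinuous g) (hg_bot : ∀ w, g w ≠ ⊥) (hg_proper : ∃ w, g w ≠ ⊤)
    (u v x : ℕ → EuclideanSpace ℝ (Fin n))
    (hu : ∀ t : ℕ, ∀ w, f (u (t+1)) + (1/(2*γ)) * ‖u (t+1) - x t‖^2
        ≤ f w + (1/(2*γ)) * ‖w - x t‖^2)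
    (hv : ∀ t : ℕ, ∀ w,
        g (v (t+1)) + (((1/(2*γ)) * ‖v (t+1) - (α • u (t+1) - x t)‖^2 : ℝ) : EReal)
        ≤ g w + (((1/(2*γ)) * ‖w - (α • u (t+1) - x t)‖^2 : ℝ) : EReal))
    (hx : ∀ t : ℕ, x (t+1) = x t + v (t+1) - u (t+1)) :
    ∀ t : ℕ, g (v t) ≠ ⊤ → g (v (t+1)) ≠ ⊤ →
      meritFun γ α f g (u (t+1)) (v (t+1)) (x t) - meritFun γ α f g (u (t+1)) (v t) (x t)
        ≤ (((1/γ) * (‖u (t+1) - v t‖^2 - ‖x (t+1) - x t‖^2) : ℝ) : EReal) := by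
  intro t hvt hvt1
  lift g (v t) to ℝ using ⟨hvt, hg_bot _⟩ with a ha
  lift g (v (t+1)) to ℝ using ⟨hvt1, hg_bot _⟩ with b hb
  have key := hv t (v t)
  rw [← ha, ← hb, ← EReal.coe_add, ← EReal.coe_add, EReal.coe_le_coe_iff] at key
  have hxx : x (t+1) - x t = v (t+1) - u (t+1) := by rw [hx t]; abel
  have hid := pdr_key_id α (u (t+1)) (v t) (v (t+1)) (x t)
  have hinner : ⟪x t - (α - 1) • u (t+1), v (t+1) - u (t+1)⟫_ℝ
      - ⟪x t - (α - 1) • u (t+1), v t - u (t+1)⟫_ℝ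
      = ⟪x t - (α - 1) • u (t+1), v (t+1) - v t⟫_ℝ := by
    rw [← inner_sub_right]; congr 1; abel
  have hnorm : ‖v (t+1) - u (t+1)‖ = ‖u (t+1) - v (t+1)‖ := norm_sub_rev _ _
  simp only [meritFun, hxx, hnorm, ← ha, ← hb]
  rw [← EReal.coe_add, ← EReal.coe_sub, ← EReal.coe_add, ← EReal.coe_add,
      ← EReal.coe_add, ← EReal.coe_sub, ← EReal.coe_add, ← EReal.coe_add,
      ← EReal.coe_sub, EReal.coe_le_coe_iff]
  rw [hnorm] at hid
  have h2γ : 1/γ = 2 * (1/(2*γ)) := by field_simp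
  set c := 1/(2*γ) with hc
  set A := ‖v t - (α • u (t+1) - x t)‖^2
  set B := ‖v (t+1) - (α • u (t+1) - x t)‖^2
  set D := ‖u (t+1) - v t‖^2
  set C := ‖u (t+1) - v (t+1)‖^2
  set I := ⟪x t - (α - 1) • u (t+1), v (t+1) - v t⟫_ℝ
  set I1 := ⟪x t - (α - 1) • u (t+1), v (t+1) - u (t+1)⟫_ℝ
  set I2 := ⟪x t - (α - 1) • u (t+1), v t - u (t+1)⟫_ℝ
  have hid2 : c*A - c*B + (1/γ)*I = c*D - c*C := by
    rw [h2γ]; linear_combination c * hid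
  have hin2 : (1/γ)*I1 - (1/γ)*I2 = (1/γ)*I := by linear_combination (1/γ) * hinner
  have hrhs : (1/γ)*(D - C) = 2*(c*D) - 2*(c*C) := by rw [h2γ]; ring
  linarith [key, hid2, hin2, hrhs]
end

section
/- Let f : ℝⁿ → ℝ be differentiable with L-Lipschitz continuous gradient (L > 0), let l ∈ ℝ be such that f + (l/2)‖·‖² is convex, and let γ > 0 with γl < 1. Suppose (u^t, v^t, x^t) are PDR iterates with g(v^t) finite. Then for all t ≥ 1, M_γ(u^{t+1}, v^t, x^t) − M_γ(u^t, v^t, x^t) ≤ [ −(1/2)(1/γ − l) + (2−α)/γ + ((2−α)/(2γ))(−1 + 2γl) + ((2−α)/(2γ))(1 + γL)² ]·‖u^{t+1} − u^t‖². -/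
/-!
Up to terms that do not depend on `u`, the merit function `M_γ(u, vᵗ, xᵗ)` is the proximal
objective `f u + ‖u - xᵗ‖² / (2γ)` minus `(2 - α)/(2γ) ‖u - vᵗ‖²`. The point `uᵗ⁺¹` minimizes
the proximal objective, which is `(1/γ - l)`-strongly convex, so the first part drops by at least
`(1/γ - l)/2 ‖Δ‖²`, where `Δ = uᵗ⁺¹ - uᵗ`. The optimality conditions of the `u`-updates at steps
`t - 1` and `t`, together with `xᵗ = xᵗ⁻¹ + vᵗ - uᵗ`, give `uᵗ⁺¹ - vᵗ = γ (∇f uᵗ - ∇f uᵗ⁺¹)`.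
Hence `‖uᵗ - vᵗ‖² - ‖uᵗ⁺¹ - vᵗ‖² = ‖Δ‖² + 2γ ⟪∇f uᵗ - ∇f uᵗ⁺¹, -Δ⟫`, and the inner product lies
between `-l ‖Δ‖²` (weak convexity) and `L ‖Δ‖²` (Lipschitz gradient).
-/

open scoped InnerProductSpace RealInnerProductSpace
open Filter Topology

theorem ConvexOn.add_fderiv_sub_le {E : Type*} [NormedAddCommGroup E] [NormedSpace ℝ E]
    {s : Set E} {h : E → ℝ} {h' : E →L[ℝ] ℝ} {a b : E} (hh : ConvexOn ℝ s h)
    (ha : a ∈ s) (hb : b ∈ s) (hd : HasFDerivAt h h' a) :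
    h a + h' (b - a) ≤ h b := by
  have hline := hh.comp_affineMap (AffineMap.lineMap a b : ℝ →ᵃ[ℝ] E)
  have hderiv : HasDerivAt (h ∘ AffineMap.lineMap a b) (h' (b - a)) (0 : ℝ) := by
    rw [← AffineMap.lineMap_apply_zero a b (k := ℝ)] at hd
    exact hd.comp_hasDerivAt 0 AffineMap.hasDerivAt_lineMap
  simpa [slope_def_field, le_sub_iff_add_le'] using
    hline.le_slope_of_hasDerivAt (by simpa using ha) (by simpa using hb) one_pos hderiv

variable {E : Type*} [NormedAddCommGroup E] [InnerProductSpace ℝ E]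

noncomputable def proxObjective (f : E → ℝ) (γ : ℝ) (x w : E) : ℝ :=
  f w + 1/(2*γ) * ‖w - x‖^2

noncomputable def meritSmooth (γ α : ℝ) (f : E → ℝ) (u v x : E) : ℝ :=
  f u - 1/(2*γ) * ‖u - v‖^2 + 1/γ * ⟪x - (α - 1) • u, v - u⟫ + (2 - α)/(2*γ) * ‖u‖^2

theorem meritSmooth_sub_meritSmooth (γ α : ℝ) (f : E → ℝ) (u u' v x : E) :
    meritSmooth γ α f u' v x - meritSmooth γ α f u v x
      = proxObjective f γ x u' - proxObjective f γ x u
        - (2 - α)/(2*γ) * (‖u' - v‖^2 - ‖u - v‖^2) := by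
  simp only [meritSmooth, proxObjective, norm_sub_sq_real, inner_sub_left, inner_sub_right,
    real_inner_smul_left, real_inner_self_eq_norm_sq, real_inner_comm x]
  ring

variable [CompleteSpace E]

theorem add_inner_gradient_sub_le_of_convexOn_add_sq_norm {f : E → ℝ} {l : ℝ} {a : E}
    (hconv : ConvexOn ℝ Set.univ (fun w => f w + (l/2) * ‖w‖^2)) (hf : DifferentiableAt ℝ f a)
    (b : E) : f a + ⟪gradient f a, b - a⟫ - l/2 * ‖b - a‖^2 ≤ f b := by
  have hd := hf.hasFDerivAt.add (((hasStrictFDerivAt_norm_sq a).hasFDerivAt).const_mul (l/2))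
  have := hconv.add_fderiv_sub_le (Set.mem_univ a) (Set.mem_univ b) hd
  simp only [add_apply, smul_apply, ← inner_gradient_left, innerSL_apply_apply, smul_eq_mul,
    nsmul_eq_mul, Nat.cast_ofNat] at this
  have hsq : ‖b - a‖^2 = ‖b‖^2 - 2 * ⟪a, b - a⟫ - ‖a‖^2 := by
    rw [norm_sub_sq_real, inner_sub_right, real_inner_self_eq_norm_sq, real_inner_comm]
    ring
  rw [hsq]
  linarith

theorem le_inner_gradient_sub_of_convexOn_add_sq_norm {f : E → ℝ} {l : ℝ} {a b : E}
    (hconv : ConvexOn ℝ Set.univ (fun w => f w + (l/2) * ‖w‖^2))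
    (ha : DifferentiableAt ℝ f a) (hb : DifferentiableAt ℝ f b) :
    -l * ‖a - b‖^2 ≤ ⟪gradient f a - gradient f b, a - b⟫ := by
  have hab := add_inner_gradient_sub_le_of_convexOn_add_sq_norm hconv ha b
  have hba := add_inner_gradient_sub_le_of_convexOn_add_sq_norm hconv hb a
  rw [norm_sub_rev] at hab
  have hneg : ⟪gradient f a, a - b⟫ = -⟪gradient f a, b - a⟫ := by
    rw [← inner_neg_right, neg_sub]
  rw [inner_sub_left, hneg]
  linarith

theorem gradient_eq_of_isLocalMin_proxObjective {f : E → ℝ} {γ : ℝ} {x u : E}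
    (hf : DifferentiableAt ℝ f u) (hmin : IsLocalMin (proxObjective f γ x) u) :
    gradient f u = γ⁻¹ • (x - u) := by
  have hd := hf.hasFDerivAt.add
    ((((hasFDerivAt_id u).sub_const x).norm_sq).const_mul (1/(2*γ)))
  have hcrit := hmin.hasFDerivAt_eq_zero hd
  rw [← (InnerProductSpace.toDual ℝ E).injective.eq_iff]
  ext w
  have hw := DFunLike.congr_fun hcrit w
  simp only [one_div, mul_inv_rev, id_eq, map_sub, ContinuousLinearMap.comp_id, add_apply,
    smul_apply, sub_apply, coe_innerSL_apply, nsmul_eq_mul, Nat.cast_ofNat, smul_eq_mul,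
    zero_apply] at hw
  simp only [toDual_gradient, map_smul, map_sub, smul_apply, sub_apply,
    InnerProductSpace.toDual_apply_apply, smul_eq_mul]
  linarith

theorem proxObjective_add_le_of_isLocalMin {f : E → ℝ} {γ l : ℝ} {x u : E}
    (hconv : ConvexOn ℝ Set.univ (fun w => f w + (l/2) * ‖w‖^2))
    (hf : DifferentiableAt ℝ f u) (hmin : IsLocalMin (proxObjective f γ x) u) (w : E) :
    proxObjective f γ x u + (1/γ - l)/2 * ‖w - u‖^2 ≤ proxObjective f γ x w := by
  have hfw := add_inner_gradient_sub_le_of_convexOn_add_sq_norm hconv hf w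
  rw [gradient_eq_of_isLocalMin_proxObjective hf hmin, real_inner_smul_left] at hfw
  have hsq : ‖w - x‖^2 = ‖w - u‖^2 - 2 * ⟪x - u, w - u⟫ + ‖u - x‖^2 := by
    rw [← sub_add_sub_cancel w u x, norm_add_sq_real, ← neg_sub x u, inner_neg_right,
      real_inner_comm, neg_sub]
    ring
  unfold proxObjective
  rw [hsq]
  linear_combination hfw

theorem meritSmooth_sub_le {f : E → ℝ} {γ α l L : ℝ} {u u' v x : E} (hγ : 0 < γ) (hα : α ≤ 2)
    (hf : Differentiable ℝ f) (hconv : ConvexOn ℝ Set.univ (fun w => f w + (l/2) * ‖w‖^2))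
    (hlip : ∀ y₁ y₂, ‖gradient f y₁ - gradient f y₂‖ ≤ L * ‖y₁ - y₂‖)
    (hu : gradient f u = γ⁻¹ • (x - v)) (hu' : IsLocalMin (proxObjective f γ x) u') :
    meritSmooth γ α f u' v x - meritSmooth γ α f u v x
      ≤ (-(1/2) * (1/γ - l) + (2 - α)/γ + ((2 - α)/(2*γ)) * (-1 + 2*γ*l)
          + ((2 - α)/(2*γ)) * (1 + γ*L)^2) * ‖u' - u‖^2 := by
  set m := ⟪gradient f u - gradient f u', u - u'⟫
  have hdescent := proxObjective_add_le_of_isLocalMin hconv (hf u') hu' u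
  have hm_lo : -l * ‖u - u'‖^2 ≤ m :=
    le_inner_gradient_sub_of_convexOn_add_sq_norm hconv (hf u) (hf u')
  have hm_hi : m ≤ L * ‖u - u'‖^2 := by
    refine (real_inner_le_norm _ _).trans ?_
    rw [sq, ← mul_assoc]
    exact mul_le_mul_of_nonneg_right (hlip u u') (norm_nonneg _)
  have hv : u' - v = γ • (gradient f u - gradient f u') := by
    rw [hu, gradient_eq_of_isLocalMin_proxObjective (hf u') hu', ← smul_sub, smul_smul,
      mul_inv_cancel₀ hγ.ne', one_smul, sub_sub_sub_cancel_left]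
  have hdist : ‖u - v‖^2 - ‖u' - v‖^2 = ‖u - u'‖^2 + 2 * γ * m := by
    rw [← sub_add_sub_cancel u u' v, norm_add_sq_real, hv, real_inner_smul_right,
      real_inner_comm]
    ring
  have hdist_le : ‖u - v‖^2 - ‖u' - v‖^2 ≤ (2 + 2*γ*l + 2*γ*L + (γ*L)^2) * ‖u' - u‖^2 := by
    rw [hdist, norm_sub_rev u']
    -- with `Δ = u' - u`, the slack is `2γ (m + l‖Δ‖²) + 4γ (L‖Δ‖² - m) + (1 - γL)² ‖Δ‖²`
    linarith [mul_le_mul_of_nonneg_left hm_lo (by positivity : (0:ℝ) ≤ 2 * γ),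
      mul_le_mul_of_nonneg_left hm_hi (by positivity : (0:ℝ) ≤ 4 * γ),
      mul_nonneg (sq_nonneg (1 - γ*L)) (sq_nonneg ‖u - u'‖)]
  have hcoef : 0 ≤ (2 - α)/(2*γ) := div_nonneg (by linarith) (by positivity)
  rw [meritSmooth_sub_meritSmooth]
  rw [norm_sub_rev u] at hdescent
  calc _ ≤ -((1/γ - l)/2 * ‖u' - u‖^2)
          + (2 - α)/(2*γ) * ((2 + 2*γ*l + 2*γ*L + (γ*L)^2) * ‖u' - u‖^2) := by
        linarith [mul_le_mul_of_nonneg_left hdist_le hcoef]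
    _ = _ := by ring

theorem meritFun_sub_meritFun_le {n : ℕ} {γ α : ℝ} {f : EuclideanSpace ℝ (Fin n) → ℝ}
    {g : EuclideanSpace ℝ (Fin n) → EReal} {u u' v x : EuclideanSpace ℝ (Fin n)}
    (hg : g v ≠ ⊤) :
    meritFun γ α f g u' v x - meritFun γ α f g u v x
      ≤ ((meritSmooth γ α f u' v x - meritSmooth γ α f u v x : ℝ) : EReal) := by
  by_cases hbot : g v = ⊥
  · -- both merit values are `⊥`, and `⊥ - ⊥ = ⊥` in `EReal`
    simp [meritFun, hbot]
  obtain ⟨r, hr⟩ : ∃ r : ℝ, g v = r := ⟨_, (EReal.coe_toReal hg hbot).symm⟩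
  have hM : ∀ w, meritFun γ α f g w v x = ((meritSmooth γ α f w v x + r : ℝ) : EReal) := by
    intro w
    rw [meritFun, meritSmooth, hr]
    norm_cast
    ring
  rw [hM, hM, ← EReal.coe_sub, add_sub_add_right_eq_sub]

theorem pdr_merit_u_update_general {n : ℕ} (L l γ α : ℝ) (hγ : 0 < γ)
    (hα : 3/2 < α ∧ α ≤ 2)
    (f : EuclideanSpace ℝ (Fin n) → ℝ) (g : EuclideanSpace ℝ (Fin n) → EReal)
    (hf : Differentiable ℝ f)
    (hlip : ∀ y₁ y₂, ‖gradient f y₁ - gradient f y₂‖ ≤ L * ‖y₁ - y₂‖)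
    (hconv : ConvexOn ℝ Set.univ (fun w => f w + (l/2) * ‖w‖^2))
    (u v x : ℕ → EuclideanSpace ℝ (Fin n))
    (hu : ∀ t : ℕ, ∀ w, f (u (t+1)) + (1/(2*γ)) * ‖u (t+1) - x t‖^2
        ≤ f w + (1/(2*γ)) * ‖w - x t‖^2)
    (hx : ∀ t : ℕ, x (t+1) = x t + v (t+1) - u (t+1)) :
    ∀ t : ℕ, 1 ≤ t → g (v t) ≠ ⊤ →
      meritFun γ α f g (u (t+1)) (v t) (x t) - meritFun γ α f g (u t) (v t) (x t)
        ≤ (((-(1/2) * (1/γ - l) + (2 - α)/γ + ((2 - α)/(2*γ)) * (-1 + 2*γ*l)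
              + ((2 - α)/(2*γ)) * (1 + γ*L)^2) * ‖u (t+1) - u t‖^2 : ℝ) : EReal) := by
  intro t ht hg
  obtain ⟨s, rfl⟩ := Nat.exists_eq_add_of_le' ht
  have hprox : ∀ t, IsLocalMin (proxObjective f γ (x t)) (u (t+1)) :=
    fun t => Eventually.of_forall (hu t)
  have hgrad : gradient f (u (s+1)) = γ⁻¹ • (x (s+1) - v (s+1)) := by
    rw [gradient_eq_of_isLocalMin_proxObjective (hf _) (hprox s), hx s,
      sub_right_comm, add_sub_cancel_right]
  calc _ ≤ _ := meritFun_sub_meritFun_le hg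
    _ ≤ _ := EReal.coe_le_coe_iff.2 <|
      meritSmooth_sub_le hγ hα.2 hf hconv hlip hgrad (hprox (s+1))

/-- the `u`-update decrease estimate for the merit function. -/
theorem pdr_merit_u_update {n : ℕ} (L l γ α : ℝ) (hL : 0 < L) (hγ : 0 < γ) (hγl : γ * l < 1)
    (hα : 3/2 < α ∧ α ≤ 2)
    (f : EuclideanSpace ℝ (Fin n) → ℝ) (g : EuclideanSpace ℝ (Fin n) → EReal)
    (hf : Differentiable ℝ f)
    (hlip : ∀ y₁ y₂, ‖gradient f y₁ - gradient f y₂‖ ≤ L * ‖y₁ - y₂‖)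
    (hconv : ConvexOn ℝ Set.univ (fun w => f w + (l/2) * ‖w‖^2))
    (hg_lsc : LowerSemicontinuous g) (hg_bot : ∀ w, g w ≠ ⊥) (hg_proper : ∃ w, g w ≠ ⊤)
    (u v x : ℕ → EuclideanSpace ℝ (Fin n))
    (hu : ∀ t : ℕ, ∀ w, f (u (t+1)) + (1/(2*γ)) * ‖u (t+1) - x t‖^2
        ≤ f w + (1/(2*γ)) * ‖w - x t‖^2)
    (hv : ∀ t : ℕ, ∀ w,
        g (v (t+1)) + (((1/(2*γ)) * ‖v (t+1) - (α • u (t+1) - x t)‖^2 : ℝ) : EReal)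
        ≤ g w + (((1/(2*γ)) * ‖w - (α • u (t+1) - x t)‖^2 : ℝ) : EReal))
    (hx : ∀ t : ℕ, x (t+1) = x t + v (t+1) - u (t+1)) :
    ∀ t : ℕ, 1 ≤ t → g (v t) ≠ ⊤ →
      meritFun γ α f g (u (t+1)) (v t) (x t) - meritFun γ α f g (u t) (v t) (x t)
        ≤ (((-(1/2) * (1/γ - l) + (2 - α)/γ + ((2 - α)/(2*γ)) * (-1 + 2*γ*l)
              + ((2 - α)/(2*γ)) * (1 + γ*L)^2) * ‖u (t+1) - u t‖^2 : ℝ) : EReal) :=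
  pdr_merit_u_update_general L l γ α hγ hα f g hf hlip hconv u v x hu hx
end

section
/- (Theorem 3.1, descent part.) Let f : ℝⁿ → ℝ be differentiable with L-Lipschitz continuous gradient (L > 0), let l ∈ ℝ be such that f + (l/2)‖·‖² is convex, let g : ℝⁿ → (−∞, +∞] be proper and lower semicontinuous, let α ∈ (3/2, 2], and let γ > 0 satisfy the step-size condition ((4−α)/2)(1+γL)² + ((9−2α)/2)γl − (1+α)/2 < 0. Suppose (u^t, v^t, x^t) are PDR iterates. Set A := −(1/γ)[((4−α)/2)(1+γL)² + ((9−2α)/2)γl − (1+α)/2] > 0. Then for all t ≥ 1, M_γ(u^{t+1}, v^{t+1}, x^{t+1}) − M_γ(u^t, v^t, x^t) ≤ −A·‖u^{t+1} − u^t‖²; in particular the sequence {M_γ(u^t, v^t, x^t)}_{t≥1} is nonincreasing. -/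
/-! The u-step gives `∇f(u^{t+1}) = (x^t - u^{t+1})/γ`; together with the previous x-update it
also gives `∇f(u^t) = (x^t - v^t)/γ`, so `v^t - u^{t+1} = γ (∇f(u^{t+1}) - ∇f(u^t))` has norm at
most `γL‖u^{t+1} - u^t‖`. The merit difference splits exactly into an f-part, bounded through the
hypoconvexity of `f`, a g-part, nonpositive because `v^{t+1}` beats `v^t` in the v-step, and a
quadratic form in `u^{t+1} - u^t` and `v^t - u^{t+1}`, which hypomonotonicity of `∇f` and
Cauchy–Schwarz bound by a multiple of `‖u^{t+1} - u^t‖²`. Since `g` is proper, `g(v^t)` is finite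
for `t ≥ 1`, so the merit values are real and the estimate is carried out in `ℝ`. -/

open scoped InnerProductSpace RealInnerProductSpace
open Filter Topology

open Set

theorem ConvexOn.add_le_of_hasFDerivAt {F : Type*} [NormedAddCommGroup F] [NormedSpace ℝ F]
    {φ : F → ℝ} {φ' : F →L[ℝ] ℝ} {a : F} (hφ : ConvexOn ℝ univ φ) (h : HasFDerivAt φ φ' a)
    (b : F) : φ a + φ' (b - a) ≤ φ b := by
  have hline : ConvexOn ℝ univ (φ ∘ AffineMap.lineMap (k := ℝ) a b) :=
    hφ.comp_affineMap (AffineMap.lineMap a b)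
  have hderiv : HasDerivAt (φ ∘ AffineMap.lineMap (k := ℝ) a b) (φ' (b - a)) 0 := by
    have := AffineMap.lineMap_apply_zero (k := ℝ) a b
    exact (this ▸ h).comp_hasDerivAt 0 AffineMap.hasDerivAt_lineMap
  have := hline.le_slope_of_hasDerivAt (mem_univ 0) (mem_univ 1) one_pos hderiv
  simp only [slope_def_field, Function.comp_apply, AffineMap.lineMap_apply_zero,
    AffineMap.lineMap_apply_one, sub_zero, div_one] at this
  linarith

theorem EReal.toReal_add_le_toReal_add {a b : EReal} {c d : ℝ} (ha : a ≠ ⊤) (ha' : a ≠ ⊥)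
    (hb : b ≠ ⊤) (hb' : b ≠ ⊥) (h : a + c ≤ b + d) : a.toReal + c ≤ b.toReal + d := by
  rw [← EReal.coe_toReal ha ha', ← EReal.coe_toReal hb hb'] at h
  exact_mod_cast h

theorem EReal.ne_top_of_add_coe_le {a b : EReal} {c d : ℝ} (h : a + c ≤ b + d) (hb : b ≠ ⊤) :
    a ≠ ⊤ := by
  rintro rfl
  rw [EReal.top_add_coe, top_le_iff] at h
  exact EReal.add_ne_top hb (EReal.coe_ne_top d) h

noncomputable def pdrDescentConst (γ α l L : ℝ) : ℝ :=
  -(1/γ) * (((4 - α)/2) * (1 + γ*L)^2 + ((9 - 2*α)/2) * (γ*l) - (1 + α)/2)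

theorem pdr_quadratic_le {γ α l L D E I : ℝ} (hγ : 0 < γ) (hα : α ≤ 2) (hD : 0 ≤ D)
    (hE₀ : 0 ≤ E) (hE : E ≤ γ * L * D) (hI₀ : -(γ * l) * D ^ 2 ≤ I) (hI : I ≤ D * E) :
    l / 2 * D ^ 2 + γ⁻¹ * ((1 - α) / 2 * D ^ 2 + E ^ 2 + (2 - α) * I)
      ≤ -pdrDescentConst γ α l L * D ^ 2 := by
  have hE2 : E ^ 2 ≤ (γ * L * D) ^ 2 := pow_le_pow_left₀ hE₀ hE 2
  have hDE : D * E ≤ γ * L * D ^ 2 := by nlinarith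
  have hLl : 0 ≤ (γ * L + γ * l) * D ^ 2 := by nlinarith
  -- the gap between the two sides is ((2-α)/2)(γL-1)²D² + (4-α)(γL+γl)D² plus the slack in hE, hI
  have hpoly : (γ * l + 1 - α) / 2 * D ^ 2 + E ^ 2 + (2 - α) * I
      ≤ (((4 - α)/2) * (1 + γ*L)^2 + ((9 - 2*α)/2) * (γ*l) - (1 + α)/2) * D ^ 2 := by
    nlinarith [mul_nonneg (sub_nonneg.2 hα) (sq_nonneg ((γ * L - 1) * D))]
  have hscale := mul_le_mul_of_nonneg_left hpoly (inv_nonneg.2 hγ.le)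
  unfold pdrDescentConst
  field_simp at hscale ⊢
  linarith

section
variable {E : Type*} [NormedAddCommGroup E] [InnerProductSpace ℝ E]

noncomputable def realMerit (γ α : ℝ) (f h : E → ℝ) (u v x : E) : ℝ :=
  f u + h v - (1/(2*γ)) * ‖u - v‖^2 + (1/γ) * ⟪x - (α - 1) • u, v - u⟫
    + ((2 - α)/(2*γ)) * ‖u‖^2

theorem realMerit_pdr_step_sub_eq (γ α : ℝ) (f h : E → ℝ) (u₀ v₀ x₀ u₁ v₁ : E) :
    realMerit γ α f h u₁ v₁ (x₀ + v₁ - u₁) - realMerit γ α f h u₀ v₀ x₀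
      = (f u₁ - f u₀ - γ⁻¹ * ⟪x₀ - u₁, u₁ - u₀⟫)
        + (h v₁ + 1 / (2 * γ) * ‖v₁ - (α • u₁ - x₀)‖ ^ 2
          - (h v₀ + 1 / (2 * γ) * ‖v₀ - (α • u₁ - x₀)‖ ^ 2))
        + γ⁻¹ * ((1 - α) / 2 * ‖u₁ - u₀‖ ^ 2 + ‖v₀ - u₁‖ ^ 2 + (2 - α) * ⟪u₁ - u₀, v₀ - u₁⟫) := by
  simp only [realMerit, ← real_inner_self_eq_norm_sq, inner_add_left, inner_sub_left,
    inner_sub_right, real_inner_smul_right, real_inner_comm]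
  ring

variable [CompleteSpace E]

theorem sub_le_inner_add_of_convexOn_add_sq {f : E → ℝ} {l : ℝ}
    (hconv : ConvexOn ℝ univ (fun w => f w + (l / 2) * ‖w‖ ^ 2)) {G a : E}
    (hG : HasGradientAt f G a) (b : E) :
    f a - f b ≤ ⟪G, a - b⟫ + (l / 2) * ‖a - b‖ ^ 2 := by
  have hφ := hG.hasFDerivAt.add ((hasStrictFDerivAt_norm_sq a).hasFDerivAt.const_mul (l / 2))
  have := hconv.add_le_of_hasFDerivAt hφ b
  simp only [add_apply, smul_apply, InnerProductSpace.toDual_apply_apply,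
    innerSL_apply_apply] at this
  rw [norm_sub_sq_real]
  simp only [inner_sub_right, nsmul_eq_mul, smul_eq_mul, real_inner_self_eq_norm_sq] at this ⊢
  nlinarith [real_inner_comm a b]

theorem neg_mul_sq_le_inner_sub_of_convexOn_add_sq {f : E → ℝ} {l : ℝ}
    (hconv : ConvexOn ℝ univ (fun w => f w + (l / 2) * ‖w‖ ^ 2)) {Ga Gb a b : E}
    (ha : HasGradientAt f Ga a) (hb : HasGradientAt f Gb b) :
    -l * ‖a - b‖ ^ 2 ≤ ⟪Ga - Gb, a - b⟫ := by
  have hab := sub_le_inner_add_of_convexOn_add_sq hconv ha b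
  have hba := sub_le_inner_add_of_convexOn_add_sq hconv hb a
  rw [norm_sub_rev b a, ← neg_sub a b, inner_neg_right] at hba
  rw [inner_sub_left]
  linarith

theorem HasGradientAt.eq_smul_sub_of_prox {f : E → ℝ} {γ : ℝ} {G u x : E}
    (hG : HasGradientAt f G u)
    (hmin : ∀ w, f u + 1 / (2 * γ) * ‖u - x‖ ^ 2 ≤ f w + 1 / (2 * γ) * ‖w - x‖ ^ 2) :
    G = γ⁻¹ • (x - u) := by
  have hsum := hG.hasFDerivAt.add
    ((((hasFDerivAt_id u).sub_const x).norm_sq).const_mul (1 / (2 * γ)))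
  have hzero := IsLocalMin.hasFDerivAt_eq_zero (Eventually.of_forall hmin) hsum
  refine ext_inner_right ℝ fun y => ?_
  have := congrArg (fun T : E →L[ℝ] ℝ => T y) hzero
  simp only [add_apply, smul_apply, InnerProductSpace.toDual_apply_apply,
    ContinuousLinearMap.comp_apply, innerSL_apply_apply, ContinuousLinearMap.id_apply,
    zero_apply, id_eq] at this
  simp only [real_inner_smul_left, inner_sub_left, nsmul_eq_mul, smul_eq_mul] at this ⊢
  linear_combination this

theorem realMerit_pdr_step_sub_le {f h : E → ℝ} {γ α l L : ℝ} (hγ : 0 < γ) (hα : α ≤ 2)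
    (hconv : ConvexOn ℝ univ (fun w => f w + (l / 2) * ‖w‖ ^ 2)) {u₀ v₀ x₀ u₁ v₁ G₀ G₁ : E}
    (hG₀ : HasGradientAt f G₀ u₀) (hG₁ : HasGradientAt f G₁ u₁)
    (hlip : ‖G₁ - G₀‖ ≤ L * ‖u₁ - u₀‖)
    (hprox₀ : G₀ = γ⁻¹ • (x₀ - v₀)) (hprox₁ : G₁ = γ⁻¹ • (x₀ - u₁))
    (hv_step : h v₁ + 1 / (2 * γ) * ‖v₁ - (α • u₁ - x₀)‖ ^ 2
      ≤ h v₀ + 1 / (2 * γ) * ‖v₀ - (α • u₁ - x₀)‖ ^ 2) :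
    realMerit γ α f h u₁ v₁ (x₀ + v₁ - u₁) - realMerit γ α f h u₀ v₀ x₀
      ≤ -pdrDescentConst γ α l L * ‖u₁ - u₀‖ ^ 2 := by
  have hf_upper : f u₁ - f u₀ - γ⁻¹ * ⟪x₀ - u₁, u₁ - u₀⟫ ≤ l / 2 * ‖u₁ - u₀‖ ^ 2 := by
    have := sub_le_inner_add_of_convexOn_add_sq hconv hG₁ u₀
    rw [hprox₁, real_inner_smul_left] at this
    linarith
  have he : v₀ - u₁ = γ • (G₁ - G₀) := by
    rw [hprox₀, hprox₁, ← smul_sub, smul_smul, mul_inv_cancel₀ hγ.ne', one_smul]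
    abel
  have hE : ‖v₀ - u₁‖ ≤ γ * L * ‖u₁ - u₀‖ := by
    rw [he, norm_smul, Real.norm_of_nonneg hγ.le, mul_assoc]
    exact mul_le_mul_of_nonneg_left hlip hγ.le
  have hI : -(γ * l) * ‖u₁ - u₀‖ ^ 2 ≤ ⟪u₁ - u₀, v₀ - u₁⟫ := by
    rw [he, real_inner_smul_right, real_inner_comm]
    have := neg_mul_sq_le_inner_sub_of_convexOn_add_sq hconv hG₁ hG₀
    nlinarith
  rw [realMerit_pdr_step_sub_eq]
  linarith [pdr_quadratic_le hγ hα (norm_nonneg _) (norm_nonneg _) hE hI (real_inner_le_norm _ _)]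

end

theorem meritFun_eq_coe_realMerit {n : ℕ} (γ α : ℝ) (f : EuclideanSpace ℝ (Fin n) → ℝ)
    {g : EuclideanSpace ℝ (Fin n) → EReal} (u x : EuclideanSpace ℝ (Fin n))
    {v : EuclideanSpace ℝ (Fin n)} (hv : g v ≠ ⊤) (hv' : g v ≠ ⊥) :
    meritFun γ α f g u v x = realMerit γ α f (fun w => (g w).toReal) u v x := by
  rw [meritFun, realMerit, ← EReal.coe_toReal hv hv']
  norm_cast

theorem pdr_merit_descent_general {n : ℕ} (L l γ α : ℝ) (hγ : 0 < γ)
    (hα : 3/2 < α ∧ α ≤ 2)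
    (hstep : ((4 - α)/2) * (1 + γ*L)^2 + ((9 - 2*α)/2) * (γ*l) - (1 + α)/2 < 0)
    (f : EuclideanSpace ℝ (Fin n) → ℝ) (g : EuclideanSpace ℝ (Fin n) → EReal)
    (hf : Differentiable ℝ f)
    (hlip : ∀ y₁ y₂, ‖gradient f y₁ - gradient f y₂‖ ≤ L * ‖y₁ - y₂‖)
    (hconv : ConvexOn ℝ Set.univ (fun w => f w + (l/2) * ‖w‖^2))
    (hg_bot : ∀ w, g w ≠ ⊥) (hg_proper : ∃ w, g w ≠ ⊤)
    (u v x : ℕ → EuclideanSpace ℝ (Fin n))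
    (hu : ∀ t : ℕ, ∀ w, f (u (t+1)) + (1/(2*γ)) * ‖u (t+1) - x t‖^2
        ≤ f w + (1/(2*γ)) * ‖w - x t‖^2)
    (hv : ∀ t : ℕ, ∀ w,
        g (v (t+1)) + (((1/(2*γ)) * ‖v (t+1) - (α • u (t+1) - x t)‖^2 : ℝ) : EReal)
        ≤ g w + (((1/(2*γ)) * ‖w - (α • u (t+1) - x t)‖^2 : ℝ) : EReal))
    (hx : ∀ t : ℕ, x (t+1) = x t + v (t+1) - u (t+1))
    (A : ℝ)
    (hA : A = -(1/γ) * (((4 - α)/2) * (1 + γ*L)^2 + ((9 - 2*α)/2) * (γ*l) - (1 + α)/2)) :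
    0 < A ∧
    (∀ t : ℕ, 1 ≤ t →
      meritFun γ α f g (u (t+1)) (v (t+1)) (x (t+1)) - meritFun γ α f g (u t) (v t) (x t)
        ≤ ((-A * ‖u (t+1) - u t‖^2 : ℝ) : EReal)) ∧
    (∀ t : ℕ, 1 ≤ t →
      meritFun γ α f g (u (t+1)) (v (t+1)) (x (t+1))
        ≤ meritFun γ α f g (u t) (v t) (x t)) := by
  have hA_pos : 0 < A := hA ▸ mul_pos_of_neg_of_neg (by simpa using hγ) hstep
  obtain ⟨w₀, hw₀⟩ := hg_proper
  have hg_fin : ∀ t, g (v (t + 1)) ≠ ⊤ := fun t => EReal.ne_top_of_add_coe_le (hv t w₀) hw₀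
  have hmerit : ∀ t, meritFun γ α f g (u (t + 1)) (v (t + 1)) (x (t + 1))
      = realMerit γ α f (fun w => (g w).toReal) (u (t + 1)) (v (t + 1)) (x (t + 1)) :=
    fun t => meritFun_eq_coe_realMerit γ α f _ _ (hg_fin t) (hg_bot _)
  have hdescent : ∀ k, realMerit γ α f (fun w => (g w).toReal) (u (k + 2)) (v (k + 2)) (x (k + 2))
      - realMerit γ α f (fun w => (g w).toReal) (u (k + 1)) (v (k + 1)) (x (k + 1))
      ≤ -A * ‖u (k + 2) - u (k + 1)‖ ^ 2 := fun k => by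
    rw [hx (k + 1), hA]
    refine realMerit_pdr_step_sub_le hγ hα.2 hconv (hf _).hasGradientAt (hf _).hasGradientAt
      (hlip _ _) ?_ ((hf _).hasGradientAt.eq_smul_sub_of_prox (hu _)) ?_
    · rw [(hf _).hasGradientAt.eq_smul_sub_of_prox (hu k), hx k]
      congr 1
      abel
    · exact EReal.toReal_add_le_toReal_add (hg_fin _) (hg_bot _) (hg_fin _) (hg_bot _) (hv _ _)
  refine ⟨hA_pos, fun t ht => ?_, fun t ht => ?_⟩ <;> obtain ⟨k, rfl⟩ := Nat.exists_eq_add_of_le' ht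
  · rw [hmerit, hmerit, ← EReal.coe_sub, EReal.coe_le_coe_iff]
    exact hdescent k
  · rw [hmerit, hmerit, EReal.coe_le_coe_iff]
    linarith [hdescent k, mul_nonneg hA_pos.le (sq_nonneg ‖u (k + 2) - u (k + 1)‖)]

/-- Theorem 3.1, descent part: under the step-size condition, the merit
function decreases by at least `A‖u^{t+1} − u^t‖²` at each iteration `t ≥ 1`; in
particular it is nonincreasing. -/
theorem pdr_merit_descent {n : ℕ} (L l γ α : ℝ) (hL : 0 < L) (hγ : 0 < γ)
    (hα : 3/2 < α ∧ α ≤ 2)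
    (hstep : ((4 - α)/2) * (1 + γ*L)^2 + ((9 - 2*α)/2) * (γ*l) - (1 + α)/2 < 0)
    (f : EuclideanSpace ℝ (Fin n) → ℝ) (g : EuclideanSpace ℝ (Fin n) → EReal)
    (hf : Differentiable ℝ f)
    (hlip : ∀ y₁ y₂, ‖gradient f y₁ - gradient f y₂‖ ≤ L * ‖y₁ - y₂‖)
    (hconv : ConvexOn ℝ Set.univ (fun w => f w + (l/2) * ‖w‖^2))
    (hg_lsc : LowerSemicontinuous g) (hg_bot : ∀ w, g w ≠ ⊥) (hg_proper : ∃ w, g w ≠ ⊤)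
    (u v x : ℕ → EuclideanSpace ℝ (Fin n))
    (hu : ∀ t : ℕ, ∀ w, f (u (t+1)) + (1/(2*γ)) * ‖u (t+1) - x t‖^2
        ≤ f w + (1/(2*γ)) * ‖w - x t‖^2)
    (hv : ∀ t : ℕ, ∀ w,
        g (v (t+1)) + (((1/(2*γ)) * ‖v (t+1) - (α • u (t+1) - x t)‖^2 : ℝ) : EReal)
        ≤ g w + (((1/(2*γ)) * ‖w - (α • u (t+1) - x t)‖^2 : ℝ) : EReal))
    (hx : ∀ t : ℕ, x (t+1) = x t + v (t+1) - u (t+1))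
    (A : ℝ)
    (hA : A = -(1/γ) * (((4 - α)/2) * (1 + γ*L)^2 + ((9 - 2*α)/2) * (γ*l) - (1 + α)/2)) :
    0 < A ∧
    (∀ t : ℕ, 1 ≤ t →
      meritFun γ α f g (u (t+1)) (v (t+1)) (x (t+1)) - meritFun γ α f g (u t) (v t) (x t)
        ≤ ((-A * ‖u (t+1) - u t‖^2 : ℝ) : EReal)) ∧
    (∀ t : ℕ, 1 ≤ t →
      meritFun γ α f g (u (t+1)) (v (t+1)) (x (t+1))
        ≤ meritFun γ α f g (u t) (v t) (x t)) :=
  pdr_merit_descent_general L l γ α hγ hα hstep f g hf hlip hconv hg_bot hg_proper u v x hu hv hx A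
    hA
end

section
/- Let g : ℝⁿ → (−∞, +∞] be proper and lower semicontinuous, let γ > 0 and α ∈ (3/2, 2]. Suppose for each index j, the point v^j is a global minimizer of v ↦ g(v) + (1/(2γ))‖αu^j − v − x^j‖², and suppose u^j → u*, x^j → x*, v^j → v* as j → ∞. Then g(v^j) → g(v*). -/
open scoped InnerProductSpace RealInnerProductSpace
open Filter Topology

/-! Testing the minimality of `v^j` against the limit `v*` bounds `g (v^j)` above by
`g v*` plus the difference of the two quadratic penalties, which tends to `0` because both
arguments of the norm converge to `α u* - v* - x*`. Lower semicontinuity supplies the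
matching lower bound. -/

namespace EReal

theorem le_add_coe_sub_of_add_coe_le {a b : EReal} {r s : ℝ} (h : a + r ≤ b + s) :
    a ≤ b + ↑(s - r) := by
  rwa [← (addLECancellable_coe r).add_le_add_iff_right, add_assoc, ← coe_add, _root_.sub_add_cancel]

theorem tendsto_add_coe_nhds_self {ι : Type*} {l : Filter ι} (a : EReal) {c : ι → ℝ}
    (hc : Tendsto c l (𝓝 0)) : Tendsto (fun i => a + (c i : EReal)) l (𝓝 a) := by
  have hadd : ContinuousAt (fun p : EReal × EReal => p.1 + p.2) (a, 0) :=
    continuousAt_add (.inr (coe_ne_bot 0)) (.inr (coe_ne_top 0))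
  simpa [Function.comp_def] using
    hadd.tendsto.comp (tendsto_const_nhds.prodMk_nhds (tendsto_coe.2 hc))

end EReal

theorem LowerSemicontinuousAt.tendsto_of_le_add {X ι : Type*} [TopologicalSpace X]
    {l : Filter ι} {f : X → EReal} {x : X} {y : ι → X} {c : ι → ℝ}
    (hf : LowerSemicontinuousAt f x) (hy : Tendsto y l (𝓝 x)) (hc : Tendsto c l (𝓝 0))
    (hle : ∀ᶠ i in l, f (y i) ≤ f x + c i) : Tendsto (fun i => f (y i)) l (𝓝 (f x)) := by
  refine tendsto_order.2 ⟨fun a ha => hy.eventually (hf a ha), fun b hb => ?_⟩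
  filter_upwards [hle, (EReal.tendsto_add_coe_nhds_self (f x) hc).eventually (gt_mem_nhds hb)]
    with i hi hib
  exact hi.trans_lt hib

theorem g_tendsto_of_minimizers_general {n : ℕ} (γ α : ℝ)
    (g : EuclideanSpace ℝ (Fin n) → EReal)
    (hg_lsc : LowerSemicontinuous g)
    (u v x : ℕ → EuclideanSpace ℝ (Fin n))
    (ustar xstar vstar : EuclideanSpace ℝ (Fin n))
    (hmin : ∀ j : ℕ, ∀ w,
        g (v j) + (((1/(2*γ)) * ‖α • u j - v j - x j‖^2 : ℝ) : EReal)
        ≤ g w + (((1/(2*γ)) * ‖α • u j - w - x j‖^2 : ℝ) : EReal))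
    (hu : Tendsto u atTop (𝓝 ustar))
    (hx : Tendsto x atTop (𝓝 xstar))
    (hv : Tendsto v atTop (𝓝 vstar)) :
    Tendsto (fun j => g (v j)) atTop (𝓝 (g vstar)) := by
  set penalty : EuclideanSpace ℝ (Fin n) → ℝ := fun z => (1/(2*γ)) * ‖z‖^2
  have hpenalty : Continuous penalty := by fun_prop
  have hgap : Tendsto (fun j => penalty (α • u j - vstar - x j) - penalty (α • u j - v j - x j))
      atTop (𝓝 0) := by
    rw [← sub_self (penalty (α • ustar - vstar - xstar))]
    exact ((hpenalty.tendsto _).comp (((hu.const_smul α).sub_const vstar).sub hx)).sub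
      ((hpenalty.tendsto _).comp (((hu.const_smul α).sub hv).sub hx))
  exact (hg_lsc.lowerSemicontinuousAt vstar).tendsto_of_le_add hv hgap
    (.of_forall fun j => EReal.le_add_coe_sub_of_add_coe_le (hmin j vstar))

/-- if `v^j` minimizes `v ↦ g(v) + (1/(2γ))‖αu^j − v − x^j‖²` and
`u^j → u*`, `x^j → x*`, `v^j → v*`, then `g(v^j) → g(v*)`. -/
theorem g_tendsto_of_minimizers {n : ℕ} (γ α : ℝ) (hγ : 0 < γ) (hα : 3/2 < α ∧ α ≤ 2)
    (g : EuclideanSpace ℝ (Fin n) → EReal)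
    (hg_lsc : LowerSemicontinuous g) (hg_bot : ∀ w, g w ≠ ⊥) (hg_proper : ∃ w, g w ≠ ⊤)
    (u v x : ℕ → EuclideanSpace ℝ (Fin n))
    (ustar xstar vstar : EuclideanSpace ℝ (Fin n))
    (hmin : ∀ j : ℕ, ∀ w,
        g (v j) + (((1/(2*γ)) * ‖α • u j - v j - x j‖^2 : ℝ) : EReal)
        ≤ g w + (((1/(2*γ)) * ‖α • u j - w - x j‖^2 : ℝ) : EReal))
    (hu : Tendsto u atTop (𝓝 ustar))
    (hx : Tendsto x atTop (𝓝 xstar))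
    (hv : Tendsto v atTop (𝓝 vstar)) :
    Tendsto (fun j => g (v j)) atTop (𝓝 (g vstar)) :=
  g_tendsto_of_minimizers_general γ α g hg_lsc u v x ustar xstar vstar hmin hu hx hv
end
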